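/- Let s ≥ r ≥ 2 be integers and let F be an arbitrary graph. If H is an F^r-free r-graph on n vertices, then N(K_s^{(r)}, H) ≤ ex_s(n, F^s). In particular, ex_r(n, K_s^{(r)}, F^r) ≤ ex_s(n, F^s). -/
import Mathlib


open Finset

/-- A hypergraph (with vertices drawn from `ℕ`) given by its finite set of hyperedges. -/
abbrev HG : Type := Finset (Finset ℕ)

/-- The support (set of non-isolated vertices) of a hypergraph. -/
def hsupp (G : HG) : Finset ℕ := G.sup id

/-- `G` is `r`-uniform: every hyperedge has exactly `r` vertices. -/
def Uniform (r : ℕ) (G : HG) : Prop := ∀ e ∈ G, e.card = r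

/-- The image of a hypergraph under a relabelling of the vertices. -/
def emap (f : ℕ → ℕ) (G : HG) : HG := G.image (Finset.image f)

/-- `K` is an isomorphic copy of `H` (as hypergraphs; isolated vertices are irrelevant). -/
def IsCopy (H K : HG) : Prop :=
  ∃ f : ℕ → ℕ, Set.InjOn f ↑(hsupp H) ∧ emap f H = K

/-- `G` contains a subhypergraph isomorphic to `H`. -/
def Contains (G H : HG) : Prop := ∃ K, K ⊆ G ∧ IsCopy H K

/-- `N(H, G)`: the number of subhypergraphs of `G` isomorphic to `H`. -/
noncomputable def copyCount (H G : HG) : ℕ :=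
  Set.ncard {K : HG | K ⊆ G ∧ IsCopy H K}

/-- The generalized Turán number `ex_r(n, H, F)`: the maximum number of copies of `H`
in an `F`-free `r`-uniform hypergraph on `n` vertices. -/
noncomputable def exCount (r n : ℕ) (H F : HG) : ℕ :=
  sSup { m | ∃ G : HG, Uniform r G ∧ hsupp G ⊆ Finset.range n ∧
    ¬ Contains G F ∧ m = copyCount H G }

/-- The Turán number `ex_r(n, F)`: the maximum number of hyperedges in an `F`-free
`r`-uniform hypergraph on `n` vertices. -/
noncomputable def exTuran (r n : ℕ) (F : HG) : ℕ :=
  sSup { m | ∃ G : HG, Uniform r G ∧ hsupp G ⊆ Finset.range n ∧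
    ¬ Contains G F ∧ m = G.card }

/-- The complete `r`-graph `K_s^{(r)}` on `s` vertices. -/
def completeHG (r s : ℕ) : HG := Finset.powersetCard r (Finset.range s)

/-- The path `P_l` with `l` edges, as a 2-uniform hypergraph. -/
def pathG (l : ℕ) : HG := (Finset.range l).image (fun i => ({i, i+1} : Finset ℕ))

/-- The cycle `C_l` with `l` edges, as a 2-uniform hypergraph. -/
def cycleG (l : ℕ) : HG := (Finset.range l).image (fun i => ({i, (i+1) % l} : Finset ℕ))

/-- The star `S_l = K_{1,l}` with `l` edges, as a 2-uniform hypergraph. -/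
def starG (l : ℕ) : HG := (Finset.range l).image (fun i => ({0, i+1} : Finset ℕ))

/-- The `r`-expansion `F^r` of a graph `F`: insert `r - 2` new distinct vertices into each
edge of `F`, the new vertices being distinct across edges and disjoint from `V(F)`. -/
def expansion (r : ℕ) (F : HG) : HG :=
  F.image (fun e => e.image (fun v => Nat.pair 0 v) ∪
    (Finset.range (r-2)).image (fun j => Nat.pair 1 (Nat.pair (Encodable.encode e) j)))

/-- The vertex-disjoint union of the hypergraphs `H 0, …, H (k-1)`. -/
def hIUnion (k : ℕ) (H : ℕ → HG) : HG :=
  (Finset.range k).biUnion (fun i => emap (fun v => Nat.pair i v) (H i))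

/-- The vertex-disjoint union of two hypergraphs. -/
def hUnion (G H : HG) : HG := emap (fun v => 2*v) G ∪ emap (fun v => 2*v+1) H

/-- The strong chromatic number of a hypergraph (for a 2-uniform hypergraph this is
the usual chromatic number of the graph). -/
noncomputable def chromNum (G : HG) : ℕ :=
  sInf { k | ∃ c : ℕ → Fin k, ∀ e ∈ G, Set.InjOn c ↑e }

/-- The complete balanced `l`-partite `r`-graph `T_r(n, l)` on `n` vertices. -/
def turanHG (r n l : ℕ) : HG :=
  (Finset.powersetCard r (Finset.range n)).filter
    (fun e => ∀ i ∈ e, ∀ j ∈ e, i % l = j % l → i = j)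

/-- `S_{n,t}^r(n-t, l)`: take a set `U` of `t` vertices together with a disjoint copy of
`T_r(n-t, l)`, and add as hyperedges all `r`-sets meeting `U`. -/
def splitTuranHG (r n t l : ℕ) : HG :=
  (Finset.powersetCard r (Finset.range n)).filter
    (fun e => (∃ v ∈ e, v < t) ∨ ∀ i ∈ e, ∀ j ∈ e, (i - t) % l = (j - t) % l → i = j)

/-- `S_{n,t}^r`: the `n`-vertex `r`-graph of all `r`-sets meeting a fixed set of `t` vertices. -/
def starHG (r n t : ℕ) : HG :=
  (Finset.powersetCard r (Finset.range n)).filter (fun e => ∃ v ∈ e, v < t)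

/-- `F` is a member of the family `𝒦_t^r`. -/
def memFamilyK (r t : ℕ) (F : HG) : Prop :=
  Uniform r F ∧ F.card ≤ Nat.choose t 2 ∧
    ∃ S : Finset ℕ, S.card = t ∧ ∀ u ∈ S, ∀ v ∈ S, u ≠ v → ∃ e ∈ F, u ∈ e ∧ v ∈ e

/-- The maximum number of copies of `H` in an `n`-vertex `r`-graph containing no member
of the family described by the predicate `P` as a subhypergraph. -/
noncomputable def exCountFam (r n : ℕ) (H : HG) (P : HG → Prop) : ℕ :=
  sSup { m | ∃ G : HG, Uniform r G ∧ hsupp G ⊆ Finset.range n ∧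
    (∀ F : HG, P F → ¬ Contains G F) ∧ m = copyCount H G }

/-- `G` contains a Berge copy of `F`. -/
def ContainsBerge (G F : HG) : Prop :=
  ∃ f : ℕ → ℕ, Set.InjOn f ↑(hsupp F) ∧
    ∃ φ : {e : Finset ℕ // e ∈ F} → {e : Finset ℕ // e ∈ G},
      Function.Injective φ ∧ ∀ e : {e : Finset ℕ // e ∈ F}, e.1.image f ⊆ (φ e).1

/-- `ex_s(n, Berge-F)`: the maximum number of hyperedges in an `n`-vertex `s`-graph
containing no Berge copy of `F`. -/
noncomputable def exBerge (s n : ℕ) (F : HG) : ℕ :=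
  sSup { m | ∃ G : HG, Uniform s G ∧ hsupp G ⊆ Finset.range n ∧
    ¬ ContainsBerge G F ∧ m = G.card }


lemma mem_hsupp {G : HG} {v : ℕ} : v ∈ hsupp G ↔ ∃ e ∈ G, v ∈ e := by
  simp [hsupp, Finset.mem_sup]

lemma hsupp_mono {G K : HG} (h : K ⊆ G) : hsupp K ⊆ hsupp G :=
  Finset.le_iff_subset.mp (Finset.sup_mono h)

lemma contains_iff {G F' : HG} :
    Contains G F' ↔ ∃ g : ℕ → ℕ, Set.InjOn g ↑(hsupp F') ∧ emap g F' ⊆ G := by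
  constructor
  · rintro ⟨K, hKG, g, hinj, hmap⟩; exact ⟨g, hinj, hmap ▸ hKG⟩
  · rintro ⟨g, hinj, hsub⟩; exact ⟨emap g F', hsub, g, hinj, rfl⟩

lemma emap_powersetCard {f : ℕ → ℕ} {A : Finset ℕ} {k : ℕ} (hinj : Set.InjOn f ↑A) :
    emap f (Finset.powersetCard k A) = Finset.powersetCard k (A.image f) := by
  classical
  ext B
  simp only [emap, Finset.mem_image, Finset.mem_powersetCard]
  constructor
  · rintro ⟨C, ⟨hCA, hCk⟩, rfl⟩
    refine ⟨Finset.image_subset_image hCA, ?_⟩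
    rw [Finset.card_image_of_injOn (hinj.mono (Finset.coe_subset.mpr hCA))]
    exact hCk
  · rintro ⟨hBA, hBk⟩
    refine ⟨A.filter (fun a => f a ∈ B), ⟨Finset.filter_subset _ _, ?_⟩, ?_⟩
    · have himg : (A.filter (fun a => f a ∈ B)).image f = B := by
        ext b
        simp only [Finset.mem_image, Finset.mem_filter]
        constructor
        · rintro ⟨a, ⟨_, hb⟩, rfl⟩; exact hb
        · intro hb
          obtain ⟨a, haA, rfl⟩ := Finset.mem_image.mp (hBA hb)
          exact ⟨a, ⟨haA, hb⟩, rfl⟩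
      have hc := Finset.card_image_of_injOn (s := A.filter (fun a => f a ∈ B))
        (hinj.mono (Finset.coe_subset.mpr (Finset.filter_subset _ _)))
      rw [himg] at hc
      rw [← hc]; exact hBk
    · ext b
      simp only [Finset.mem_image, Finset.mem_filter]
      constructor
      · rintro ⟨a, ⟨_, hb⟩, rfl⟩; exact hb
      · intro hb
        obtain ⟨a, haA, rfl⟩ := Finset.mem_image.mp (hBA hb)
        exact ⟨a, ⟨haA, hb⟩, rfl⟩

lemma hsupp_powersetCard {A : Finset ℕ} {k : ℕ} (hk : 1 ≤ k) (hkA : k ≤ A.card) :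
    hsupp (Finset.powersetCard k A) = A := by
  apply Finset.Subset.antisymm
  · intro v hv
    rw [mem_hsupp] at hv
    obtain ⟨e, he, hve⟩ := hv
    rw [Finset.mem_powersetCard] at he
    exact he.1 hve
  · intro a ha
    obtain ⟨u, hau, huA, hu⟩ := Finset.exists_subsuperset_card_eq
      (Finset.singleton_subset_iff.mpr ha) (by simpa) hkA
    rw [mem_hsupp]
    exact ⟨u, Finset.mem_powersetCard.mpr ⟨huA, hu⟩, hau (Finset.mem_singleton_self a)⟩

lemma copy_structure {r s : ℕ} (hr : 1 ≤ r) (hrs : r ≤ s) {K : HG}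
    (h : IsCopy (completeHG r s) K) :
    K = Finset.powersetCard r (hsupp K) ∧ (hsupp K).card = s := by
  obtain ⟨f, hinj, hmap⟩ := h
  have hsc : hsupp (completeHG r s) = Finset.range s :=
    hsupp_powersetCard hr (by simpa using hrs)
  rw [hsc] at hinj
  have hK : K = Finset.powersetCard r ((Finset.range s).image f) := by
    rw [← hmap]; exact emap_powersetCard hinj
  have hcard : ((Finset.range s).image f).card = s := by
    rw [Finset.card_image_of_injOn hinj, Finset.card_range]
  have hsK : hsupp K = (Finset.range s).image f := by
    rw [hK]; exact hsupp_powersetCard hr (by omega)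
  exact ⟨by rw [hsK]; exact hK, by rw [hsK]; exact hcard⟩

lemma edge_card {r : ℕ} (hr : 2 ≤ r) {e : Finset ℕ} (he : e.card = 2) :
    (e.image (fun v => Nat.pair 0 v) ∪
      (Finset.range (r-2)).image (fun j => Nat.pair 1 (Nat.pair (Encodable.encode e) j))).card
      = r := by
  rw [Finset.card_union_of_disjoint, Finset.card_image_of_injective _
      (fun a b h => (Nat.pair_eq_pair.mp h).2),
    Finset.card_image_of_injective _
      (fun a b h => (Nat.pair_eq_pair.mp ((Nat.pair_eq_pair.mp h).2)).2),
    Finset.card_range, he]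
  · omega
  · rw [Finset.disjoint_left]
    rintro x hx1 hx2
    obtain ⟨a, _, rfl⟩ := Finset.mem_image.mp hx1
    obtain ⟨b, _, hb⟩ := Finset.mem_image.mp hx2
    exact absurd (Nat.pair_eq_pair.mp hb.symm).1 (by omega)

lemma key (r s n : ℕ) (hr : 2 ≤ r) (hrs : r ≤ s) (F : HG) (hF : Uniform 2 F)
    (H : HG) (hHn : hsupp H ⊆ Finset.range n)
    (hfree : ¬ Contains H (expansion r F)) :
    copyCount (completeHG r s) H ≤ exTuran s n (expansion s F) := by
  classical
  set 𝒮 : Finset HG := H.powerset.filter (fun K => IsCopy (completeHG r s) K) with h𝒮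
  have hmem𝒮 : ∀ K, K ∈ 𝒮 ↔ K ⊆ H ∧ IsCopy (completeHG r s) K := by
    intro K; simp [h𝒮]
  have hcc : copyCount (completeHG r s) H = 𝒮.card := by
    rw [copyCount]
    have hset : {K : HG | K ⊆ H ∧ IsCopy (completeHG r s) K} = ↑𝒮 := by
      ext K; simp [hmem𝒮 K]
    rw [hset, Set.ncard_coe_finset]
  set G : HG := 𝒮.image hsupp with hG
  have hstr : ∀ K ∈ 𝒮, K = Finset.powersetCard r (hsupp K) ∧ (hsupp K).card = s :=
    fun K hK => copy_structure (le_trans one_le_two hr) hrs ((hmem𝒮 K).mp hK).2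
  have hGcard : G.card = 𝒮.card := by
    apply Finset.card_image_of_injOn
    intro K1 h1 K2 h2 hEq
    rw [(hstr K1 (Finset.mem_coe.mp h1)).1, (hstr K2 (Finset.mem_coe.mp h2)).1, hEq]
  have hGprop : ∀ A ∈ G, A.card = s ∧ Finset.powersetCard r A ⊆ H := by
    intro A hA
    obtain ⟨K, hK, rfl⟩ := Finset.mem_image.mp hA
    exact ⟨(hstr K hK).2, by rw [← (hstr K hK).1]; exact ((hmem𝒮 K).mp hK).1⟩
  have hGuni : Uniform s G := fun A hA => (hGprop A hA).1
  have hGn : hsupp G ⊆ Finset.range n := by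
    intro v hv
    obtain ⟨A, hA, hvA⟩ := mem_hsupp.mp hv
    obtain ⟨K, hK, rfl⟩ := Finset.mem_image.mp hA
    exact hHn (hsupp_mono ((hmem𝒮 K).mp hK).1 hvA)
  have hedge : ∀ e : Finset ℕ,
      (e.image (fun v => Nat.pair 0 v) ∪
        (Finset.range (r-2)).image (fun j => Nat.pair 1 (Nat.pair (Encodable.encode e) j)))
      ⊆ (e.image (fun v => Nat.pair 0 v) ∪
        (Finset.range (s-2)).image (fun j => Nat.pair 1 (Nat.pair (Encodable.encode e) j))) := by
    intro e
    exact Finset.union_subset_union (le_refl _)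
      (Finset.image_subset_image (Finset.range_subset_range.mpr (by omega)))
  have hGfree : ¬ Contains G (expansion s F) := by
    intro hcon
    obtain ⟨g, hginj, hgsub⟩ := contains_iff.mp hcon
    apply hfree
    rw [contains_iff]
    have hss : hsupp (expansion r F) ⊆ hsupp (expansion s F) := by
      intro v hv
      obtain ⟨E, hE, hvE⟩ := mem_hsupp.mp hv
      obtain ⟨e, heF, rfl⟩ := Finset.mem_image.mp hE
      refine mem_hsupp.mpr ⟨_, ?_, hedge e hvE⟩
      exact Finset.mem_image_of_mem _ heF
    refine ⟨g, hginj.mono (Finset.coe_subset.mpr hss), ?_⟩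
    intro B hB
    obtain ⟨E, hE, rfl⟩ := Finset.mem_image.mp hB
    obtain ⟨e, heF, rfl⟩ := Finset.mem_image.mp hE
    have hAmem : ((e.image (fun v => Nat.pair 0 v) ∪
        (Finset.range (s-2)).image (fun j => Nat.pair 1 (Nat.pair (Encodable.encode e) j))).image g)
        ∈ G := by
      apply hgsub
      exact Finset.mem_image_of_mem _ (Finset.mem_image_of_mem _ heF)
    have hsubE : (e.image (fun v => Nat.pair 0 v) ∪
        (Finset.range (r-2)).image (fun j => Nat.pair 1 (Nat.pair (Encodable.encode e) j)))
        ⊆ hsupp (expansion s F) := by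
      intro v hv
      exact mem_hsupp.mpr ⟨_, Finset.mem_image_of_mem _ heF, hedge e hv⟩
    have cardB : ((e.image (fun v => Nat.pair 0 v) ∪
        (Finset.range (r-2)).image (fun j => Nat.pair 1 (Nat.pair (Encodable.encode e) j))).image g).card = r := by
      rw [Finset.card_image_of_injOn (hginj.mono (Finset.coe_subset.mpr hsubE))]
      exact edge_card hr (hF e heF)
    apply (hGprop _ hAmem).2
    exact Finset.mem_powersetCard.mpr
      ⟨Finset.image_subset_image (hedge e), cardB⟩
  have hbdd : BddAbove { m | ∃ G' : HG, Uniform s G' ∧ hsupp G' ⊆ Finset.range n ∧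
      ¬ Contains G' (expansion s F) ∧ m = G'.card } := by
    refine ⟨2 ^ n, ?_⟩
    rintro m ⟨G', _, hG'n, _, rfl⟩
    have hsub : G' ⊆ (Finset.range n).powerset := by
      intro e he
      exact Finset.mem_powerset.mpr (fun v hv => hG'n (mem_hsupp.mpr ⟨e, he, hv⟩))
    calc G'.card ≤ ((Finset.range n).powerset).card := Finset.card_le_card hsub
    _ = 2 ^ n := by simp
  rw [hcc, ← hGcard, exTuran]
  exact le_csSup hbdd ⟨G, hGuni, hGn, hGfree, rfl⟩

/-- If `H` is an `F^r`-free `r`-graph on `n` vertices then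
`N(K_s^{(r)}, H) ≤ ex_s(n, F^s)`; in particular
`ex_r(n, K_s^{(r)}, F^r) ≤ ex_s(n, F^s)`. -/
theorem stmt1 (r s n : ℕ) (hr : 2 ≤ r) (hrs : r ≤ s) (F : HG) (hF : Uniform 2 F)
    (H : HG) (hH : Uniform r H) (hHn : hsupp H ⊆ Finset.range n)
    (hfree : ¬ Contains H (expansion r F)) :
    copyCount (completeHG r s) H ≤ exTuran s n (expansion s F) ∧
    exCount r n (completeHG r s) (expansion r F) ≤ exTuran s n (expansion s F) := by
  refine ⟨key r s n hr hrs F hF H hHn hfree, ?_⟩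
  rw [exCount]
  apply csSup_le'
  rintro m ⟨G', hG'u, hG'n, hG'f, rfl⟩
  exact key r s n hr hrs F hF G' hG'n hG'f
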